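/- arXiv:1103.1237 — 2 statements merged into one kernel-verified Lean document; each statement's English description precedes it below -/
import Mathlib

section
/- Let N ≥ 2 and p > N. Suppose u ≥ 0 is classically p-superharmonic on {x : ‖x‖ > 1} ⊆ EuclideanSpace ℝ (Fin N). Then there exists C > 0 such that m(r) = inf { u(x) : r < ‖x‖ < 2r } satisfies m(r) ≤ C·r^((p−N)/(p−1)) for all r ≥ 2. -/
open MeasureTheory Filter Real Matrix
open scoped RealInnerProductSpace

/-- The vector field `F_p u (x) = ‖∇u(x)‖^(p-2) • ∇u(x)` (real power; equal to `0`
when `∇u(x) = 0`). -/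
noncomputable def pFlux (N : ℕ) (p : ℝ) (u : EuclideanSpace ℝ (Fin N) → ℝ)
    (x : EuclideanSpace ℝ (Fin N)) : EuclideanSpace ℝ (Fin N) :=
  ‖gradient u x‖ ^ (p - 2) • gradient u x

/-- The `p`-Laplacian `Δ_p u (x) = div (F_p u) (x)`. -/
noncomputable def pLaplacian (N : ℕ) (p : ℝ) (u : EuclideanSpace ℝ (Fin N) → ℝ)
    (x : EuclideanSpace ℝ (Fin N)) : ℝ :=
  ∑ i : Fin N, ⟪fderiv ℝ (pFlux N p u) x (EuclideanSpace.basisFun (Fin N) ℝ i),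
      EuclideanSpace.basisFun (Fin N) ℝ i⟫

/-- `u` is a classical supersolution of `-Δ_p u ≥ g` on `Ω`. -/
def IsPSupersolution (N : ℕ) (p : ℝ) (u : EuclideanSpace ℝ (Fin N) → ℝ)
    (g : EuclideanSpace ℝ (Fin N) → ℝ) (Ω : Set (EuclideanSpace ℝ (Fin N))) : Prop :=
  ContDiffOn ℝ 1 u Ω ∧ DifferentiableOn ℝ (pFlux N p u) Ω ∧
    ∀ x ∈ Ω, -pLaplacian N p u x ≥ g x

/-!
The proof compares `u` with the radial barriers `v = t (‖x‖ ^ α + δ ‖x‖ - c)`,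
`α = (p - N) / (p - 1)`. The profile `‖x‖ ^ α` is the fundamental solution of the `p`-Laplacian,
and the extra term `δ ‖x‖` makes `v` strictly `p`-subharmonic:
`Δ_p v = ‖∇v‖ ^ (p - 2) t δ (N - 1) / ‖x‖ > 0`.
At a point where `v` touches `u` from below we have `∇u = ∇v` and `D∇u ≥ D∇v`, and for `p ≥ 2`
the `p`-Laplacian is monotone in the Hessian at a nonzero gradient, so `Δ_p v ≤ Δ_p u ≤ 0`.
Hence `v ≤ u` on an annulus `2 ≤ ‖x‖ ≤ R` as soon as it holds on both boundary spheres.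
Normalising `v` to vanish on `‖x‖ = 2` and to equal `min_{‖x‖ = R} u` on `‖x‖ = R`, with
`δ = R ^ (α - 1)`, and evaluating at a fixed point of norm `5 / 2` gives
`min_{‖x‖ = R} u ≤ C R ^ α`; the sphere `‖x‖ = 3 r / 2` lies in the annulus `r < ‖x‖ < 2 r`.
-/

open Filter Topology

theorem IsLocalMin.nonneg_of_hasDerivAt_of_hasDerivAt {f ψ : ℝ → ℝ} {x₀ c : ℝ}
    (hmin : IsLocalMin f x₀) (hf : ∀ᶠ x in 𝓝 x₀, HasDerivAt f (ψ x) x)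
    (hψ : HasDerivAt ψ c x₀) : 0 ≤ c := by
  by_contra! hc
  have hf₀ : HasDerivAt f (ψ x₀) x₀ := hf.self_of_nhds
  have hψ₀ : ψ x₀ = 0 := hmin.hasDerivAt_eq_zero hf₀
  have hdd : deriv (deriv f) x₀ = c := by
    have hderiv : deriv f =ᶠ[𝓝 x₀] ψ := hf.mono fun x hx => hx.deriv
    rw [hderiv.deriv_eq]
    exact hψ.deriv
  have hmax : IsLocalMax f x₀ :=
    isLocalMax_of_deriv_deriv_neg (hdd ▸ hc) (hf₀.deriv.trans hψ₀) hf₀.continuousAt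
  have hconst : ∀ᶠ x in 𝓝 x₀, f x = f x₀ := by
    filter_upwards [hmin, hmax] with x h₁ h₂ using le_antisymm h₂ h₁
  have hψ_zero : (fun _ => (0 : ℝ)) =ᶠ[𝓝 x₀] ψ := by
    filter_upwards [hconst.eventually_nhds, hf] with x hx hfx
    exact ((hasDerivAt_const x (f x₀)).congr_of_eventuallyEq hx).unique hfx
  exact hc.ne ((hψ.congr_of_eventuallyEq hψ_zero).unique (hasDerivAt_const x₀ 0))

section InnerProductSpace

variable {F : Type*} [NormedAddCommGroup F] [InnerProductSpace ℝ F]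

theorem IsLocalMin.inner_apply_self_nonneg [CompleteSpace F] {h : F → ℝ} {g : F → F} {x₀ : F}
    {H : F →L[ℝ] F} (hmin : IsLocalMin h x₀) (hg : ∀ᶠ x in 𝓝 x₀, HasGradientAt h (g x) x)
    (hH : HasFDerivAt g H x₀) (w : F) : 0 ≤ ⟪H w, w⟫ := by
  set L : ℝ → F := fun s => x₀ + s • w
  have hL : ∀ s, HasDerivAt L w s := fun s => by
    simpa only [id, one_smul] using ((hasDerivAt_id s).smul_const w).const_add x₀
  have hL₀ : L 0 = x₀ := by simp [L]
  have hLt : Tendsto L (𝓝 0) (𝓝 x₀) := hL₀ ▸ (hL 0).continuousAt.tendsto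
  refine IsLocalMin.nonneg_of_hasDerivAt_of_hasDerivAt (f := h ∘ L)
    (ψ := fun s => ⟪g (L s), w⟫) (x₀ := 0) ?_ ?_ ?_
  · exact (hL₀ ▸ hmin).comp_continuous (hL 0).continuousAt
  · filter_upwards [hLt.eventually hg] with s hs
    simpa using hs.hasFDerivAt.comp_hasDerivAt s (hL s)
  · have hgL : HasDerivAt (g ∘ L) (H w) 0 := (hL₀ ▸ hH).comp_hasDerivAt 0 (hL 0)
    simpa using hgL.inner ℝ (hasDerivAt_const 0 w)

theorem HasGradientAt.sub [CompleteSpace F] {f g : F → ℝ} {f' g' x : F}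
    (hf : HasGradientAt f f' x) (hg : HasGradientAt g g' x) :
    HasGradientAt (fun y => f y - g y) (f' - g') x := by
  rw [hasGradientAt_iff_hasFDerivAt, map_sub]
  exact (hasGradientAt_iff_hasFDerivAt.1 hf).sub (hasGradientAt_iff_hasFDerivAt.1 hg)

noncomputable def radialCLM (c c' : ℝ) (y : F) : F →L[ℝ] F :=
  c • ContinuousLinearMap.id ℝ F + (c' • innerSL ℝ y).smulRight y

theorem radialCLM_apply (c c' : ℝ) (y w : F) :
    radialCLM c c' y w = c • w + (c' * ⟪y, w⟫) • y := by
  simp [radialCLM]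

theorem radialCLM_smul_vector (c c' a : ℝ) (y : F) :
    radialCLM c c' (a • y) = radialCLM c (c' * a ^ 2) y := by
  ext w
  simp only [radialCLM_apply, real_inner_smul_left, smul_smul]
  ring_nf

theorem radialCLM_comp_radialCLM (c₁ c₂ d₁ d₂ : ℝ) (y : F) :
    radialCLM c₁ c₂ y ∘L radialCLM d₁ d₂ y =
      radialCLM (c₁ * d₁) (c₁ * d₂ + c₂ * d₁ + c₂ * d₂ * ‖y‖ ^ 2) y := by
  ext w
  simp only [ContinuousLinearMap.comp_apply, radialCLM_apply, inner_add_right,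
    real_inner_smul_right, real_inner_self_eq_norm_sq]
  module

theorem hasFDerivAt_norm_rpow_of_ne_zero (γ : ℝ) {x : F} (hx : x ≠ 0) :
    HasFDerivAt (fun x : F => ‖x‖ ^ γ) ((γ * ‖x‖ ^ (γ - 2)) • innerSL ℝ x) x := by
  convert! ((hasStrictFDerivAt_norm_sq x).rpow_const (p := γ / 2) (by simp [hx])).hasFDerivAt
    using 0
  simp_rw [← Real.rpow_natCast_mul (norm_nonneg _), ← Nat.cast_smul_eq_nsmul ℝ, smul_smul]
  ring_nf

theorem hasFDerivAt_norm_rpow_smul (γ : ℝ) {x : F} (hx : x ≠ 0) :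
    HasFDerivAt (fun x : F => ‖x‖ ^ γ • x) (radialCLM (‖x‖ ^ γ) (γ * ‖x‖ ^ (γ - 2)) x) x :=
  (hasFDerivAt_norm_rpow_of_ne_zero γ hx).smul (hasFDerivAt_id x)

noncomputable def radialBarrier (α t δ c : ℝ) (x : F) : ℝ :=
  t * (‖x‖ ^ α + δ * ‖x‖ - c)

section RadialBarrier

variable {α t δ c : ℝ} {x : F}

theorem hasFDerivAt_radialBarrier (hx : x ≠ 0) :
    HasFDerivAt (radialBarrier α t δ c)
      ((t * (α * ‖x‖ ^ (α - 2) + δ * ‖x‖ ^ (-1 : ℝ))) • innerSL ℝ x) x := by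
  have h₁ := hasFDerivAt_norm_rpow_of_ne_zero α hx
  have h₂ := hasFDerivAt_norm_rpow_of_ne_zero 1 hx
  simp only [Real.rpow_one, show (1 : ℝ) - 2 = -1 by norm_num, one_mul] at h₂
  refine (((h₁.add (h₂.const_mul δ)).sub_const c).const_mul t).congr_fderiv ?_
  ext w
  simp only [smul_add, _root_.add_apply, _root_.smul_apply, coe_innerSL_apply, smul_eq_mul]
  ring

variable [CompleteSpace F]

theorem hasGradientAt_radialBarrier (hx : x ≠ 0) :
    HasGradientAt (radialBarrier α t δ c)
      ((t * (α * ‖x‖ ^ (α - 2) + δ * ‖x‖ ^ (-1 : ℝ))) • x) x := by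
  rw [hasGradientAt_iff_hasFDerivAt]
  refine (hasFDerivAt_radialBarrier hx).congr_fderiv ?_
  ext w
  simp [InnerProductSpace.toDual_apply_apply]

theorem gradient_radialBarrier_ne_zero (hα : 0 ≤ α) (ht : 0 < t) (hδ : 0 < δ) (hx : x ≠ 0) :
    gradient (radialBarrier α t δ c) x ≠ 0 := by
  have hr : 0 < ‖x‖ := norm_pos_iff.2 hx
  rw [(hasGradientAt_radialBarrier hx).gradient]
  exact smul_ne_zero (by positivity) hx

theorem hasFDerivAt_gradient_radialBarrier (hx : x ≠ 0) :
    HasFDerivAt (gradient (radialBarrier α t δ c))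
      (radialCLM (t * (α * ‖x‖ ^ (α - 2) + δ * ‖x‖ ^ (-1 : ℝ)))
        (t * (α * (α - 2) * ‖x‖ ^ (α - 4) - δ * ‖x‖ ^ (-3 : ℝ))) x) x := by
  have h := ((hasFDerivAt_norm_rpow_smul (α - 2) hx).const_smul (t * α)).add
    ((hasFDerivAt_norm_rpow_smul (-1) hx).const_smul (t * δ))
  rw [show α - 2 - 2 = α - 4 by ring, show (-1 : ℝ) - 2 = -3 by norm_num] at h
  refine (h.congr_fderiv ?_).congr_of_eventuallyEq ?_
  · ext w
    simp only [_root_.add_apply, _root_.smul_apply, radialCLM_apply]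
    module
  · filter_upwards [isOpen_ne.mem_nhds hx] with y hy
    rw [(hasGradientAt_radialBarrier hy).gradient]
    simp only [Pi.add_apply, Pi.smul_apply]
    module

end RadialBarrier

variable [FiniteDimensional ℝ F]

theorem trace_radialCLM (c c' : ℝ) (y : F) :
    LinearMap.trace ℝ F (radialCLM c c' y) = c * Module.finrank ℝ F + c' * ‖y‖ ^ 2 := by
  simp [radialCLM]

theorem trace_nonneg_of_inner_apply_self_nonneg {H : F →L[ℝ] F} (hH : ∀ w, 0 ≤ ⟪H w, w⟫) :
    0 ≤ LinearMap.trace ℝ F H := by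
  rw [LinearMap.trace_eq_sum_inner _ (stdOrthonormalBasis ℝ F)]
  exact Finset.sum_nonneg fun i _ => real_inner_comm (H _) _ ▸ hH _

theorem trace_radialCLM_comp_nonneg {c c' : ℝ} (hc : 0 ≤ c) (hc' : 0 ≤ c') (y : F)
    {H : F →L[ℝ] F} (hH : ∀ w, 0 ≤ ⟪H w, w⟫) :
    0 ≤ LinearMap.trace ℝ F (radialCLM c c' y ∘L H) := by
  have : (radialCLM c c' y ∘L H : F →ₗ[ℝ] F) =
      c • (H : F →ₗ[ℝ] F) + ((c' • innerSL ℝ y ∘L H : F →L[ℝ] ℝ) : F →ₗ[ℝ] ℝ).smulRight y := by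
    ext w
    simp [radialCLM_apply]
  rw [this, map_add, map_smul, LinearMap.trace_smulRight]
  simp only [smul_eq_mul, ContinuousLinearMap.coe_coe, ContinuousLinearMap.comp_apply,
    _root_.smul_apply, innerSL_apply_apply]
  exact add_nonneg (mul_nonneg hc (trace_nonneg_of_inner_apply_self_nonneg hH))
    (mul_nonneg hc' (real_inner_comm y (H y) ▸ hH y))

end InnerProductSpace

theorem rpow_sub_two_mul_sq {r : ℝ} (hr : 0 < r) (γ : ℝ) : r ^ (γ - 2) * r ^ 2 = r ^ γ := by
  rw [← Real.rpow_natCast, ← Real.rpow_add hr]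
  norm_num

variable {N : ℕ} {p : ℝ}

local notation "E" => EuclideanSpace ℝ (Fin N)

theorem norm_pFlux (hp : 1 < p) (u : E → ℝ) (x : E) :
    ‖pFlux N p u x‖ = ‖gradient u x‖ ^ (p - 1) := by
  rcases eq_or_ne (gradient u x) 0 with h | h
  · simp [pFlux, h, Real.zero_rpow (by linarith : p - 1 ≠ 0)]
  · rw [pFlux, norm_smul, Real.norm_of_nonneg (by positivity), show p - 1 = p - 2 + 1 by ring,
      Real.rpow_add_one (norm_ne_zero_iff.2 h)]

theorem gradient_eq_pFlux_rpow_smul (hp : 1 < p) (u : E → ℝ) (x : E) :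
    gradient u x = ‖pFlux N p u x‖ ^ ((2 - p) / (p - 1)) • pFlux N p u x := by
  rcases eq_or_ne (gradient u x) 0 with h | h
  · simp [pFlux, h]
  · have hpos : 0 < ‖gradient u x‖ := norm_pos_iff.2 h
    have hp₁ : p - 1 ≠ 0 := by linarith
    rw [norm_pFlux hp, pFlux, smul_smul, ← Real.rpow_mul hpos.le, ← Real.rpow_add hpos,
      show (p - 1) * ((2 - p) / (p - 1)) + (p - 2) = 0 by field_simp; ring, Real.rpow_zero,
      one_smul]

theorem differentiableAt_gradient_of_pFlux {u : E → ℝ} {x : E} (hp : 1 < p)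
    (hF : DifferentiableAt ℝ (pFlux N p u) x) (hx : gradient u x ≠ 0) :
    DifferentiableAt ℝ (gradient u) x := by
  have hF₀ : pFlux N p u x ≠ 0 := by
    rw [← norm_ne_zero_iff, norm_pFlux hp]
    exact (Real.rpow_pos_of_pos (norm_pos_iff.2 hx) _).ne'
  rw [show gradient u = fun y => ‖pFlux N p u y‖ ^ ((2 - p) / (p - 1)) • pFlux N p u y from
    funext (gradient_eq_pFlux_rpow_smul hp u)]
  exact (hasFDerivAt_norm_rpow_smul _ hF₀).differentiableAt.comp x hF

theorem pLaplacian_eq_trace (u : E → ℝ) (x : E) :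
    pLaplacian N p u x = LinearMap.trace ℝ E (fderiv ℝ (pFlux N p u) x) := by
  rw [LinearMap.trace_eq_sum_inner _ (EuclideanSpace.basisFun (Fin N) ℝ), pLaplacian]
  simp only [ContinuousLinearMap.coe_coe, real_inner_comm]

theorem pLaplacian_eq_trace_of_hasFDerivAt_gradient {u : E → ℝ} {x : E} {H : E →L[ℝ] E}
    (hH : HasFDerivAt (gradient u) H x) (hx : gradient u x ≠ 0) :
    pLaplacian N p u x = LinearMap.trace ℝ E (radialCLM (‖gradient u x‖ ^ (p - 2))
      ((p - 2) * ‖gradient u x‖ ^ (p - 4)) (gradient u x) ∘L H) := by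
  have hF : HasFDerivAt (pFlux N p u) _ x := (hasFDerivAt_norm_rpow_smul (p - 2) hx).comp x hH
  rw [pLaplacian_eq_trace, hF.fderiv, show p - 2 - 2 = p - 4 by ring]

theorem pLaplacian_le_of_isLocalMin_sub (hp : 2 ≤ p) {u v : E → ℝ} {x₀ : E}
    (hu : ∀ᶠ x in 𝓝 x₀, DifferentiableAt ℝ u x) (hF : DifferentiableAt ℝ (pFlux N p u) x₀)
    (hv : ∀ᶠ x in 𝓝 x₀, DifferentiableAt ℝ v x) (hvg : DifferentiableAt ℝ (gradient v) x₀)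
    (hv₀ : gradient v x₀ ≠ 0) (hmin : IsLocalMin (fun x => u x - v x) x₀) :
    pLaplacian N p v x₀ ≤ pLaplacian N p u x₀ := by
  have hsub : ∀ᶠ x in 𝓝 x₀,
      HasGradientAt (fun y => u y - v y) (gradient u x - gradient v x) x := by
    filter_upwards [hu, hv] with x hux hvx using hux.hasGradientAt.sub hvx.hasGradientAt
  have hgrad : gradient u x₀ = gradient v x₀ := by
    have h := hmin.hasFDerivAt_eq_zero (hasGradientAt_iff_hasFDerivAt.1 hsub.self_of_nhds)
    rwa [LinearIsometryEquiv.map_eq_zero_iff, sub_eq_zero] at h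
  have hu₀ : gradient u x₀ ≠ 0 := hgrad ▸ hv₀
  have hHu := (differentiableAt_gradient_of_pFlux (by linarith) hF hu₀).hasFDerivAt
  have hHv := hvg.hasFDerivAt
  have hpsd := hmin.inner_apply_self_nonneg hsub (hHu.sub hHv)
  have key := trace_radialCLM_comp_nonneg (c := ‖gradient v x₀‖ ^ (p - 2))
    (c' := (p - 2) * ‖gradient v x₀‖ ^ (p - 4)) (by positivity)
    (mul_nonneg (by linarith) (by positivity)) (gradient v x₀) hpsd
  rw [ContinuousLinearMap.comp_sub, ContinuousLinearMap.toLinearMap_sub, map_sub] at key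
  rw [pLaplacian_eq_trace_of_hasFDerivAt_gradient hHu hu₀,
    pLaplacian_eq_trace_of_hasFDerivAt_gradient hHv hv₀, hgrad]
  linarith

theorem le_on_compact_of_le_on_diff (hp : 2 ≤ p) {u v : E → ℝ} {K U : Set E}
    (hK : IsCompact K) (hU : IsOpen U) (hUK : U ⊆ K)
    (hu_cont : ContinuousOn u K) (hu_diff : DifferentiableOn ℝ u U)
    (hF : DifferentiableOn ℝ (pFlux N p u) U) (hu_super : ∀ x ∈ U, pLaplacian N p u x ≤ 0)
    (hv_cont : ContinuousOn v K) (hv_diff : DifferentiableOn ℝ v U)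
    (hv_grad : ∀ x ∈ U, DifferentiableAt ℝ (gradient v) x) (hv_ne : ∀ x ∈ U, gradient v x ≠ 0)
    (hv_sub : ∀ x ∈ U, 0 < pLaplacian N p v x) (hbd : ∀ x ∈ K \ U, v x ≤ u x) :
    ∀ x ∈ K, v x ≤ u x := by
  intro x hx
  obtain ⟨x₀, hx₀, hmin⟩ := hK.exists_isMinOn ⟨x, hx⟩ (hu_cont.sub hv_cont)
  have hx₀x : u x₀ - v x₀ ≤ u x - v x := hmin hx
  suffices 0 ≤ u x₀ - v x₀ by linarith
  by_cases hx₀U : x₀ ∈ U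
  · have hU₀ : U ∈ 𝓝 x₀ := hU.mem_nhds hx₀U
    have := pLaplacian_le_of_isLocalMin_sub hp
      (eventually_of_mem hU₀ fun y hy => hu_diff.differentiableAt (hU.mem_nhds hy))
      (hF.differentiableAt hU₀)
      (eventually_of_mem hU₀ fun y hy => hv_diff.differentiableAt (hU.mem_nhds hy))
      (hv_grad x₀ hx₀U) (hv_ne x₀ hx₀U) (hmin.isLocalMin (mem_of_superset hU₀ hUK))
    linarith [hu_super x₀ hx₀U, hv_sub x₀ hx₀U]
  · exact sub_nonneg.2 (hbd x₀ ⟨hx₀, hx₀U⟩)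
theorem pLaplacian_radialBarrier {t δ c : ℝ} (hp : 1 < p) (hpN : (N : ℝ) ≤ p) (ht : 0 < t)
    (hδ : 0 < δ) {x : E} (hx : x ≠ 0) :
    pLaplacian N p (radialBarrier ((p - N) / (p - 1)) t δ c) x =
      ‖gradient (radialBarrier ((p - N) / (p - 1)) t δ c) x‖ ^ (p - 2) *
        (t * δ * (N - 1) * ‖x‖ ^ (-1 : ℝ)) := by
  set α := (p - N) / (p - 1)
  have hα : α * (p - 1) = p - N := div_mul_cancel₀ _ (by linarith)
  have hα₀ : 0 ≤ α := div_nonneg (by linarith) (by linarith)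
  set r := ‖x‖
  have hr : 0 < r := norm_pos_iff.2 hx
  set d₁ := t * (α * r ^ (α - 2) + δ * r ^ (-1 : ℝ))
  set d₂ := t * (α * (α - 2) * r ^ (α - 4) - δ * r ^ (-3 : ℝ))
  have hd₁ : 0 < d₁ := by positivity
  have hgrad : gradient (radialBarrier α t δ c) x = d₁ • x :=
    (hasGradientAt_radialBarrier hx).gradient
  rw [pLaplacian_eq_trace_of_hasFDerivAt_gradient (hasFDerivAt_gradient_radialBarrier hx)
      (gradient_radialBarrier_ne_zero hα₀ ht hδ hx),
    hgrad, radialCLM_smul_vector, radialCLM_comp_radialCLM, trace_radialCLM,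
    finrank_euclideanSpace_fin, norm_smul, Real.norm_of_nonneg hd₁.le]
  have hc : (d₁ * r) ^ (p - 4) * (d₁ * r) ^ 2 = (d₁ * r) ^ (p - 2) := by
    rw [show p - 4 = p - 2 - 2 by ring]
    exact rpow_sub_two_mul_sq (by positivity) _
  have hr₁ : r ^ (α - 4) * r ^ 2 = r ^ (α - 2) := by
    rw [show α - 4 = α - 2 - 2 by ring]
    exact rpow_sub_two_mul_sq hr _
  have hr₂ : r ^ (-3 : ℝ) * r ^ 2 = r ^ (-1 : ℝ) := by
    rw [show (-3 : ℝ) = -1 - 2 by norm_num]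
    exact rpow_sub_two_mul_sq hr _
  have hd₂ : d₂ * r ^ 2 = t * (α * (α - 2) * r ^ (α - 2) - δ * r ^ (-1 : ℝ)) := by
    linear_combination t * α * (α - 2) * hr₁ - t * δ * hr₂
  linear_combination (p - 2) * (d₁ + d₂ * r ^ 2) * hc + (p - 1) * (d₁ * r) ^ (p - 2) * hd₂
    + (d₁ * r) ^ (p - 2) * t * α * r ^ (α - 2) * hα

theorem pLaplacian_radialBarrier_pos {t δ c : ℝ} (hN : 2 ≤ N) (hpN : (N : ℝ) < p)
    (ht : 0 < t) (hδ : 0 < δ) {x : E} (hx : x ≠ 0) :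
    0 < pLaplacian N p (radialBarrier ((p - N) / (p - 1)) t δ c) x := by
  have hN' : (2 : ℝ) ≤ N := by exact_mod_cast hN
  have hgrad := gradient_radialBarrier_ne_zero (c := c)
    (div_nonneg (by linarith : 0 ≤ p - N) (by linarith : 0 ≤ p - 1)) ht hδ hx
  have hr : 0 < ‖x‖ := norm_pos_iff.2 hx
  have hN₁ : (0 : ℝ) < N - 1 := by linarith
  rw [pLaplacian_radialBarrier (by linarith) hpN.le ht hδ hx]
  exact mul_pos (Real.rpow_pos_of_pos (norm_pos_iff.2 hgrad) _) (by positivity)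

theorem radialBarrier_le_of_le_on_sphere {u : E → ℝ} (hN : 2 ≤ N) (hpN : (N : ℝ) < p)
    (hu : IsPSupersolution N p u (fun _ => 0) {x | 1 < ‖x‖}) (hnn : ∀ x : E, 1 < ‖x‖ → 0 ≤ u x)
    {R t δ : ℝ} (ht : 0 < t) (hδ : 0 < δ)
    (hR : ∀ x : E, ‖x‖ = R →
      radialBarrier ((p - N) / (p - 1)) t δ (2 ^ ((p - N) / (p - 1)) + δ * 2) x ≤ u x)
    {x : E} (hx₂ : 2 ≤ ‖x‖) (hxR : ‖x‖ ≤ R) :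
    radialBarrier ((p - N) / (p - 1)) t δ (2 ^ ((p - N) / (p - 1)) + δ * 2) x ≤ u x := by
  obtain ⟨hC, hF, hsuper⟩ := hu
  have hN' : (2 : ℝ) ≤ N := by exact_mod_cast hN
  have hα : 0 ≤ (p - N) / (p - 1) := div_nonneg (by linarith) (by linarith)
  set K : Set E := {x | 2 ≤ ‖x‖ ∧ ‖x‖ ≤ R}
  set U : Set E := {x | 2 < ‖x‖ ∧ ‖x‖ < R}
  have hKΩ : K ⊆ {x | 1 < ‖x‖} := fun x hx => one_lt_two.trans_le hx.1
  have hUK : U ⊆ K := fun x hx => ⟨hx.1.le, hx.2.le⟩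
  have hne : ∀ x ∈ K, x ≠ 0 := fun x hx => norm_pos_iff.1 (two_pos.trans_le hx.1)
  have hK : IsCompact K :=
    (isCompact_closedBall 0 R).of_isClosed_subset
      ((isClosed_le continuous_const continuous_norm).inter
        (isClosed_le continuous_norm continuous_const))
      fun x hx => mem_closedBall_zero_iff.2 hx.2
  have hU : IsOpen U :=
    (isOpen_lt continuous_const continuous_norm).inter (isOpen_lt continuous_norm continuous_const)
  refine le_on_compact_of_le_on_diff (by linarith) hK hU hUK (hC.continuousOn.mono hKΩ)
    ((hC.differentiableOn one_ne_zero).mono (hUK.trans hKΩ)) (hF.mono (hUK.trans hKΩ))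
    (fun y hy => neg_nonneg.1 (hsuper y (hKΩ (hUK hy))))
    (fun y hy => (hasFDerivAt_radialBarrier (hne y hy)).continuousAt.continuousWithinAt)
    (fun y hy =>
      (hasFDerivAt_radialBarrier (hne y (hUK hy))).differentiableAt.differentiableWithinAt)
    (fun y hy => (hasFDerivAt_gradient_radialBarrier (hne y (hUK hy))).differentiableAt)
    (fun y hy => gradient_radialBarrier_ne_zero hα ht hδ (hne y (hUK hy)))
    (fun y hy => pLaplacian_radialBarrier_pos hN hpN ht hδ (hne y (hUK hy)))
    ?_ x ⟨hx₂, hxR⟩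
  rintro y ⟨⟨hy₂, hyR⟩, hyU⟩
  rcases hy₂.eq_or_lt with h₂ | h₂
  · simp only [radialBarrier, ← h₂, sub_self, mul_zero]
    exact hnn y (by linarith)
  · exact hR y (hyR.eq_of_not_lt fun h => hyU ⟨h₂, h⟩)

theorem mul_rpow_sub_le_of_le_on_sphere {u : E → ℝ} (hN : 2 ≤ N) (hpN : (N : ℝ) < p)
    (hu : IsPSupersolution N p u (fun _ => 0) {x | 1 < ‖x‖}) (hnn : ∀ x : E, 1 < ‖x‖ → 0 ≤ u x)
    {R M : ℝ} (hM : ∀ x : E, ‖x‖ = R → M ≤ u x) {x₁ : E} (hx₁ : 2 < ‖x₁‖) (hx₁R : ‖x₁‖ ≤ R) :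
    M * (‖x₁‖ ^ ((p - N) / (p - 1)) - 2 ^ ((p - N) / (p - 1))) ≤
      2 * R ^ ((p - N) / (p - 1)) * u x₁ := by
  have hN' : (2 : ℝ) ≤ N := by exact_mod_cast hN
  set α := (p - N) / (p - 1)
  have hα : 0 < α := div_pos (by linarith) (by linarith)
  have hR : 0 < R := by linarith
  have hu₁ : 0 ≤ u x₁ := hnn x₁ (by linarith)
  have h2α : (0 : ℝ) < 2 ^ α := by positivity
  have hρ : 2 ^ α < ‖x₁‖ ^ α := Real.rpow_lt_rpow zero_le_two hx₁ hα
  have hRα : 2 ^ α < R ^ α := Real.rpow_lt_rpow zero_le_two (hx₁.trans_le hx₁R) hα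
  rcases le_or_gt M 0 with hM₀ | hM₀
  · nlinarith [Real.rpow_pos_of_pos hR α]
  -- this choice of `δ` makes the perturbation `δ ‖x‖` at most `R ^ α` on the annulus
  set δ := R ^ (α - 1)
  have hδ : 0 < δ := Real.rpow_pos_of_pos hR _
  have hδR : δ * R = R ^ α := by rw [← Real.rpow_add_one hR.ne', sub_add_cancel]
  set D := R ^ α + δ * R - (2 ^ α + δ * 2)
  have hD : 0 < D := by nlinarith
  have ht : 0 < M / D := div_pos hM₀ hD
  have hbar := radialBarrier_le_of_le_on_sphere hN hpN hu hnn ht hδ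
    (fun x hx => by rw [radialBarrier, hx, div_mul_cancel₀ _ hD.ne']; exact hM x hx)
    hx₁.le hx₁R
  have hx₁' : M / D * (‖x₁‖ ^ α - 2 ^ α) ≤ u x₁ :=
    (mul_le_mul_of_nonneg_left (by nlinarith) ht.le).trans hbar
  calc M * (‖x₁‖ ^ α - 2 ^ α) = D * (M / D * (‖x₁‖ ^ α - 2 ^ α)) := by field_simp
    _ ≤ D * u x₁ := mul_le_mul_of_nonneg_left hx₁' hD.le
    _ ≤ 2 * R ^ α * u x₁ := mul_le_mul_of_nonneg_right (by linarith) hu₁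

theorem exists_min_on_sphere [NeZero N] {u : E → ℝ} (hu : ContinuousOn u {x | 1 < ‖x‖})
    {R : ℝ} (hR : 1 < R) : ∃ x₀ : E, ‖x₀‖ = R ∧ ∀ x : E, ‖x‖ = R → u x₀ ≤ u x := by
  obtain ⟨x₀, hx₀, hmin⟩ := (isCompact_sphere (0 : E) R).exists_isMinOn
    (NormedSpace.sphere_nonempty.2 (by linarith))
    (hu.mono fun x hx => show 1 < ‖x‖ by rwa [mem_sphere_zero_iff_norm.1 hx])
  exact ⟨x₀, mem_sphere_zero_iff_norm.1 hx₀, fun x hx => hmin (mem_sphere_zero_iff_norm.2 hx)⟩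

/-- If `N ≥ 2`, `p > N`, and `u ≥ 0` is classically `p`-superharmonic on `{‖x‖ > 1}`, then
there is `C > 0` with `m(r) = inf_{r < ‖x‖ < 2r} u(x) ≤ C r^((p-N)/(p-1))` for `r ≥ 2`. -/
theorem m_upper_bound_p_gt_N (N : ℕ) (hN : 2 ≤ N) (p : ℝ) (hpN : (N : ℝ) < p)
    (u : EuclideanSpace ℝ (Fin N) → ℝ)
    (hu_nonneg : ∀ x : EuclideanSpace ℝ (Fin N), 1 < ‖x‖ → 0 ≤ u x)
    (hu_super : IsPSupersolution N p u (fun _ => 0)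
      {x : EuclideanSpace ℝ (Fin N) | 1 < ‖x‖}) :
    ∃ C : ℝ, 0 < C ∧ ∀ r : ℝ, 2 ≤ r →
      sInf (u '' {x : EuclideanSpace ℝ (Fin N) | r < ‖x‖ ∧ ‖x‖ < 2 * r}) ≤
        C * r ^ ((p - (N : ℝ)) / (p - 1)) := by
  have : NeZero N := ⟨by omega⟩
  have hN' : (2 : ℝ) ≤ N := by exact_mod_cast hN
  set α := (p - N) / (p - 1)
  have hα : 0 < α := div_pos (by linarith) (by linarith)
  obtain ⟨x₁, hx₁⟩ := exists_norm_eq (EuclideanSpace ℝ (Fin N)) (by norm_num : (0 : ℝ) ≤ 5 / 2)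
  have hu₁ : 0 ≤ u x₁ := hu_nonneg x₁ (by rw [hx₁]; norm_num)
  set κ := (5 / 2 : ℝ) ^ α - 2 ^ α
  have hκ : 0 < κ := sub_pos.2 (Real.rpow_lt_rpow (by norm_num) (by norm_num) hα)
  refine ⟨2 * (3 / 2) ^ α * u x₁ / κ + 1, by positivity, fun r hr => ?_⟩
  obtain ⟨x₀, hx₀, hmin⟩ := exists_min_on_sphere hu_super.1.continuousOn
    (by linarith : 1 < 3 / 2 * r)
  have hest := mul_rpow_sub_le_of_le_on_sphere hN hpN hu_super hu_nonneg hmin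
    (by rw [hx₁]; norm_num) (by rw [hx₁]; linarith)
  rw [hx₁, Real.mul_rpow (by norm_num) (by linarith)] at hest
  have hbdd : BddBelow (u '' {x | r < ‖x‖ ∧ ‖x‖ < 2 * r}) :=
    ⟨0, Set.forall_mem_image.2 fun x hx => hu_nonneg x (by linarith [hx.1])⟩
  calc sInf (u '' {x | r < ‖x‖ ∧ ‖x‖ < 2 * r})
      ≤ u x₀ := csInf_le hbdd ⟨x₀, ⟨by linarith, by linarith⟩, rfl⟩
    _ ≤ 2 * (3 / 2) ^ α * u x₁ / κ * r ^ α := by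
      rw [div_mul_eq_mul_div, le_div_iff₀ hκ]
      linarith
    _ ≤ (2 * (3 / 2) ^ α * u x₁ / κ + 1) * r ^ α := by
      gcongr
      linarith
end

section
/- Let a > 0 and define u : EuclideanSpace ℝ (Fin 2) → ℝ by u(x) = (2/a)·(log‖x‖ + log(log‖x‖)). Then on the exterior domain Ω = {x : ‖x‖ > 3}, u is positive, C² (indeed smooth), and satisfies −Δu(x) = (2/a)·exp(−a·u(x)) for every x ∈ Ω. -/
open MeasureTheory Filter Real Matrix
open scoped RealInnerProductSpace

/-- The Laplacian of `u` at `x`: the sum of pure second partial derivatives in the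
directions of the standard orthonormal basis. -/
noncomputable def laplacian (N : ℕ) (u : EuclideanSpace ℝ (Fin N) → ℝ)
    (x : EuclideanSpace ℝ (Fin N)) : ℝ :=
  ∑ i : Fin N, iteratedFDeriv ℝ 2 u x
    ![EuclideanSpace.basisFun (Fin N) ℝ i, EuclideanSpace.basisFun (Fin N) ℝ i]

lemma log_three_gt : (1:ℝ) < Real.log 3 := by
  rw [show (1:ℝ) = Real.log (Real.exp 1) by rw [Real.log_exp]]
  exact Real.log_lt_log (Real.exp_pos 1) (by
    calc Real.exp 1 < 2.7182818286 := Real.exp_one_lt_d9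
      _ < 3 := by norm_num)

lemma log_nine_gt : (2:ℝ) < Real.log 9 := by
  have h3 := log_three_gt
  calc (2:ℝ) < 2 * Real.log 3 := by linarith
    _ = Real.log 9 := by
        rw [show (9:ℝ) = 3 ^ (2:ℕ) by norm_num, Real.log_pow]; push_cast; ring

lemma hasDerivAt_G (c t : ℝ) (ht : 9 < t) :
    HasDerivAt (fun t => c * ((1/2) * Real.log t + Real.log ((1/2) * Real.log t)))
      (c * (1/(2*t) + 1/(t * Real.log t))) t := by
  have ht0 : t ≠ 0 := by positivity
  have hlt : 2 < Real.log t := lt_trans log_nine_gt (Real.log_lt_log (by norm_num) ht)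
  have h1 : HasDerivAt Real.log t⁻¹ t := Real.hasDerivAt_log ht0
  have h2 : HasDerivAt (fun t => (1/2) * Real.log t) ((1/2) * t⁻¹) t := h1.const_mul _
  have h3 : HasDerivAt (fun t => Real.log ((1/2) * Real.log t))
      (((1/2) * Real.log t)⁻¹ * ((1/2) * t⁻¹)) t :=
    (Real.hasDerivAt_log (ne_of_gt (by linarith) : (1/2) * Real.log t ≠ 0)).comp (h₂ := Real.log) t h2
  have := (h2.add h3).const_mul c
  refine this.congr_deriv ?_
  have hl0 : Real.log t ≠ 0 := by linarith
  field_simp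

lemma hasDerivAt_P (c t : ℝ) (ht : 9 < t) :
    HasDerivAt (fun t => c * (1/(2*t) + 1/(t * Real.log t)))
      (c * (-(1/(2*t^2)) - (Real.log t + 1)/(t^2 * (Real.log t)^2))) t := by
  have ht0 : t ≠ 0 := by positivity
  have hlt : 2 < Real.log t := lt_trans log_nine_gt (Real.log_lt_log (by norm_num) ht)
  have hl0 : Real.log t ≠ 0 := by linarith
  have h1 : HasDerivAt (fun t : ℝ => 1/(2*t))
      ((0 * (2*t) - 1 * (2*1)) / (2*t)^2) t :=
    (hasDerivAt_const t 1).div (((hasDerivAt_id t).const_mul 2).congr_deriv rfl) (by positivity)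
  have h2 : HasDerivAt (fun t : ℝ => t * Real.log t) (1 * Real.log t + t * t⁻¹) t :=
    (hasDerivAt_id t).mul (Real.hasDerivAt_log ht0)
  have h3 : HasDerivAt (fun t : ℝ => 1/(t * Real.log t))
      ((0 * (t * Real.log t) - 1 * (1 * Real.log t + t * t⁻¹)) / (t * Real.log t)^2) t :=
    (hasDerivAt_const t 1).div h2 (by
      simp only [ne_eq, mul_eq_zero, not_or]; exact ⟨ht0, hl0⟩)
  have := (h1.add h3).const_mul c
  refine this.congr_deriv ?_
  field_simp
  ring

section Euc

local notation "E2" => EuclideanSpace ℝ (Fin 2)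

lemma sq_norm_gt (x : E2) (hx : 3 < ‖x‖) : (9:ℝ) < ‖x‖^2 := by
  nlinarith [norm_nonneg x]

lemma hasFDerivAt_alpha (c : ℝ) (x : E2) (hx : 3 < ‖x‖) :
    HasFDerivAt (fun y : E2 => c * (1/(2*‖y‖^2) + 1/(‖y‖^2 * Real.log (‖y‖^2))))
      ((c * (-(1/(2*(‖x‖^2)^2)) - (Real.log (‖x‖^2) + 1)/((‖x‖^2)^2 * (Real.log (‖x‖^2))^2)))
        • (2 • innerSL ℝ x)) x :=
  (hasDerivAt_P c _ (sq_norm_gt x hx)).comp_hasFDerivAt (f := fun y : E2 => ‖y‖^2) x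
    (hasStrictFDerivAt_norm_sq x).hasFDerivAt

lemma hasFDerivAt_usq (c : ℝ) (x : E2) (hx : 3 < ‖x‖) :
    HasFDerivAt (fun y : E2 => c * ((1/2) * Real.log (‖y‖^2) + Real.log ((1/2) * Real.log (‖y‖^2))))
      ((c * (1/(2*‖x‖^2) + 1/(‖x‖^2 * Real.log (‖x‖^2)))) • (2 • innerSL ℝ x)) x :=
  (hasDerivAt_G c _ (sq_norm_gt x hx)).comp_hasFDerivAt (f := fun y : E2 => ‖y‖^2) x
    (hasStrictFDerivAt_norm_sq x).hasFDerivAt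

end Euc

section Euc2

local notation "E2" => EuclideanSpace ℝ (Fin 2)

lemma second_deriv (c : ℝ) (x : E2) (hx : 3 < ‖x‖) (i : Fin 2) :
    iteratedFDeriv ℝ 2
      (fun y : E2 => c * ((1/2) * Real.log (‖y‖^2) + Real.log ((1/2) * Real.log (‖y‖^2)))) x
      ![EuclideanSpace.basisFun (Fin 2) ℝ i, EuclideanSpace.basisFun (Fin 2) ℝ i]
    = 2 * (c * (1/(2*‖x‖^2) + 1/(‖x‖^2 * Real.log (‖x‖^2))))
      + 4 * (c * (-(1/(2*(‖x‖^2)^2))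
          - (Real.log (‖x‖^2) + 1)/((‖x‖^2)^2 * (Real.log (‖x‖^2))^2))) * (x i)^2 := by
  set v : E2 → ℝ :=
    fun y => c * ((1/2) * Real.log (‖y‖^2) + Real.log ((1/2) * Real.log (‖y‖^2))) with hv
  set e : E2 := EuclideanSpace.basisFun (Fin 2) ℝ i with he
  have hs9 : (9:ℝ) < ‖x‖^2 := sq_norm_gt x hx
  have hsne : (‖x‖^2 : ℝ) ≠ 0 := by positivity
  have hlgt : 2 < Real.log (‖x‖^2) :=
    lt_trans log_nine_gt (Real.log_lt_log (by norm_num) hs9)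
  -- C² regularity
  have h0 : ContDiffAt ℝ 2 (fun y : E2 => ‖y‖^2) x := (contDiff_norm_sq ℝ).contDiffAt
  have h1 : ContDiffAt ℝ 2 (fun y : E2 => Real.log (‖y‖^2)) x :=
    (Real.contDiffAt_log.2 hsne).comp (g := Real.log) x h0
  have h2 : ContDiffAt ℝ 2 (fun y : E2 => Real.log ((1/2) * Real.log (‖y‖^2))) x :=
    (Real.contDiffAt_log.2 (ne_of_gt (by linarith))).comp (g := Real.log) x (contDiffAt_const.mul h1)
  have hv2 : ContDiffAt ℝ 2 v x :=
    contDiffAt_const.mul ((contDiffAt_const.mul h1).add h2)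
  have hdiff : DifferentiableAt ℝ (fderiv ℝ v) x :=
    (hv2.fderiv_right (m := 1) (by norm_num)).differentiableAt one_ne_zero
  -- eventual formula for the first derivative in direction e
  have hopen : IsOpen {y : E2 | 3 < ‖y‖} := isOpen_lt continuous_const continuous_norm
  have hEv : (fun y => fderiv ℝ v y e) =ᶠ[nhds x]
      (fun y => (c * (1/(2*‖y‖^2) + 1/(‖y‖^2 * Real.log (‖y‖^2)))) * (2 * y i)) := by
    filter_upwards [hopen.mem_nhds hx] with y hy
    rw [(hasFDerivAt_usq c y hy).fderiv]
    simp only [ContinuousLinearMap.smul_apply, innerSL_apply_apply, he,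
      EuclideanSpace.basisFun_apply, EuclideanSpace.inner_single_right, smul_eq_mul,
      nsmul_eq_mul, Nat.cast_ofNat, starRingEnd_apply, star_trivial, one_mul]
  -- derivative of the directional-derivative function
  have hβ : HasFDerivAt (fun y : E2 => 2 * y i)
      ((2:ℝ) • (EuclideanSpace.proj i : E2 →L[ℝ] ℝ)) x :=
    ((EuclideanSpace.proj (𝕜 := ℝ) i).hasFDerivAt (x := x)).const_mul 2
  have hg : HasFDerivAt
      (fun y : E2 => (c * (1/(2*‖y‖^2) + 1/(‖y‖^2 * Real.log (‖y‖^2)))) * (2 * y i))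
      ((c * (1/(2*‖x‖^2) + 1/(‖x‖^2 * Real.log (‖x‖^2)))) •
          ((2:ℝ) • (EuclideanSpace.proj i : E2 →L[ℝ] ℝ))
        + (2 * x i) • ((c * (-(1/(2*(‖x‖^2)^2))
            - (Real.log (‖x‖^2) + 1)/((‖x‖^2)^2 * (Real.log (‖x‖^2))^2)))
          • (2 • innerSL ℝ x))) x :=
    (hasFDerivAt_alpha c x hx).mul hβ
  have step1 : iteratedFDeriv ℝ 2 v x ![e, e] = fderiv ℝ (fderiv ℝ v) x e e := by
    rw [iteratedFDeriv_two_apply]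
    simp
  have step2 : fderiv ℝ (fun y => fderiv ℝ v y e) x = (fderiv ℝ (fderiv ℝ v) x).flip e := by
    rw [fderiv_clm_apply hdiff (differentiableAt_const _)]
    simp
  have step3 : fderiv ℝ (fun y => fderiv ℝ v y e) x = fderiv ℝ
      (fun y => (c * (1/(2*‖y‖^2) + 1/(‖y‖^2 * Real.log (‖y‖^2)))) * (2 * y i)) x :=
    hEv.fderiv_eq
  rw [step1, show fderiv ℝ (fderiv ℝ v) x e e = (fderiv ℝ (fderiv ℝ v) x).flip e e from rfl,
    ← step2, step3, hg.fderiv]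
  simp only [ContinuousLinearMap.add_apply, ContinuousLinearMap.smul_apply, innerSL_apply_apply, he,
    EuclideanSpace.basisFun_apply, EuclideanSpace.inner_single_right, smul_eq_mul,
    nsmul_eq_mul, Nat.cast_ofNat, starRingEnd_apply, star_trivial, one_mul,
    PiLp.proj_apply, EuclideanSpace.single_apply, if_pos rfl, if_true, eq_self_iff_true]
  ring

end Euc2

theorem log_loglog_solution' (a : ℝ) (ha : 0 < a)
    (u : EuclideanSpace ℝ (Fin 2) → ℝ)
    (hu : ∀ x : EuclideanSpace ℝ (Fin 2),
      u x = (2 / a) * (Real.log ‖x‖ + Real.log (Real.log ‖x‖))) :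
    (∀ x : EuclideanSpace ℝ (Fin 2), 3 < ‖x‖ → 0 < u x) ∧
    ContDiffOn ℝ (⊤ : ℕ∞) u {x : EuclideanSpace ℝ (Fin 2) | 3 < ‖x‖} ∧
    (∀ x : EuclideanSpace ℝ (Fin 2), 3 < ‖x‖ →
      -(∑ i : Fin 2, iteratedFDeriv ℝ 2 u x
        ![EuclideanSpace.basisFun (Fin 2) ℝ i, EuclideanSpace.basisFun (Fin 2) ℝ i])
        = (2 / a) * Real.exp (-a * u x)) := by
  have ha0 : a ≠ 0 := ne_of_gt ha
  have hueq : u = fun x : EuclideanSpace ℝ (Fin 2) =>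
      (2/a) * ((1/2) * Real.log (‖x‖^2) + Real.log ((1/2) * Real.log (‖x‖^2))) := by
    funext x
    have hl : Real.log (‖x‖^2) = 2 * Real.log ‖x‖ := by
      rw [Real.log_pow]; push_cast; ring
    rw [hu x, hl, show (1/2:ℝ) * (2 * Real.log ‖x‖) = Real.log ‖x‖ from by ring]
  refine ⟨?_, ?_, ?_⟩
  · intro x hx
    have hL : 1 < Real.log ‖x‖ := lt_trans log_three_gt (Real.log_lt_log (by norm_num) hx)
    have h2 : 0 < Real.log (Real.log ‖x‖) := Real.log_pos hL
    rw [hu x]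
    have : 0 < (2/a) := by positivity
    nlinarith
  · intro x hx
    have hx3 : (3:ℝ) < ‖x‖ := hx
    have hx0 : x ≠ 0 := norm_pos_iff.1 (by linarith)
    have hnne : ‖x‖ ≠ 0 := by positivity
    have hL : 1 < Real.log ‖x‖ := lt_trans log_three_gt (Real.log_lt_log (by norm_num) hx3)
    have hLne : Real.log ‖x‖ ≠ 0 := by linarith
    have hn : ContDiffAt ℝ (⊤ : ℕ∞) (fun y : EuclideanSpace ℝ (Fin 2) => ‖y‖) x :=
      contDiffAt_norm ℝ hx0
    have h1 : ContDiffAt ℝ (⊤ : ℕ∞) (fun y : EuclideanSpace ℝ (Fin 2) => Real.log ‖y‖) x :=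
      (Real.contDiffAt_log.2 hnne).comp x hn
    have h2 : ContDiffAt ℝ (⊤ : ℕ∞)
        (fun y : EuclideanSpace ℝ (Fin 2) => Real.log (Real.log ‖y‖)) x :=
      (Real.contDiffAt_log.2 hLne).comp (g := Real.log) x h1
    exact ((contDiffAt_const.mul (h1.add h2)).congr_of_eventuallyEq
      (Filter.Eventually.of_forall hu)).contDiffWithinAt
  · intro x hx
    set c := (2:ℝ)/a with hc
    have hL : 1 < Real.log ‖x‖ := lt_trans log_three_gt (Real.log_lt_log (by norm_num) hx)
    have hr0 : (0:ℝ) < ‖x‖ := by linarith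
    have hrne : ‖x‖ ≠ 0 := ne_of_gt hr0
    have hL0 : (0:ℝ) < Real.log ‖x‖ := by linarith
    have hLne : Real.log ‖x‖ ≠ 0 := ne_of_gt hL0
    have hlogsq : Real.log (‖x‖^2) = 2 * Real.log ‖x‖ := by
      rw [Real.log_pow]; push_cast; ring
    have hsum : (x 0)^2 + (x 1)^2 = ‖x‖^2 := by
      have := EuclideanSpace.norm_eq x
      rw [this, Real.sq_sqrt (by positivity)]
      simp [Fin.sum_univ_two, Real.norm_eq_abs, sq_abs]
    have hval : ∀ i : Fin 2, iteratedFDeriv ℝ 2 u x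
        ![EuclideanSpace.basisFun (Fin 2) ℝ i, EuclideanSpace.basisFun (Fin 2) ℝ i]
      = 2 * (c * (1/(2*‖x‖^2) + 1/(‖x‖^2 * Real.log (‖x‖^2))))
        + 4 * (c * (-(1/(2*(‖x‖^2)^2))
            - (Real.log (‖x‖^2) + 1)/((‖x‖^2)^2 * (Real.log (‖x‖^2))^2))) * (x i)^2 := by
      intro i
      rw [hueq]
      exact second_deriv c x hx i
    have hexp : Real.exp (-a * u x) = ((‖x‖ * ‖x‖) * (Real.log ‖x‖ * Real.log ‖x‖))⁻¹ := by
      rw [hu x, show -a * ((2/a) * (Real.log ‖x‖ + Real.log (Real.log ‖x‖)))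
        = -((Real.log ‖x‖ + Real.log ‖x‖) + (Real.log (Real.log ‖x‖) + Real.log (Real.log ‖x‖)))
        from by field_simp; ring]
      rw [Real.exp_neg, Real.exp_add, Real.exp_add, Real.exp_add, Real.exp_log hr0,
        Real.exp_log hL0]
    rw [Fin.sum_univ_two, hval 0, hval 1, hexp]
    have hcollect : (2 * (c * (1/(2*‖x‖^2) + 1/(‖x‖^2 * Real.log (‖x‖^2))))
        + 4 * (c * (-(1/(2*(‖x‖^2)^2))
            - (Real.log (‖x‖^2) + 1)/((‖x‖^2)^2 * (Real.log (‖x‖^2))^2))) * (x 0)^2)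
        + (2 * (c * (1/(2*‖x‖^2) + 1/(‖x‖^2 * Real.log (‖x‖^2))))
        + 4 * (c * (-(1/(2*(‖x‖^2)^2))
            - (Real.log (‖x‖^2) + 1)/((‖x‖^2)^2 * (Real.log (‖x‖^2))^2))) * (x 1)^2)
        = 4 * (c * (1/(2*‖x‖^2) + 1/(‖x‖^2 * Real.log (‖x‖^2))))
        + 4 * (c * (-(1/(2*(‖x‖^2)^2))
            - (Real.log (‖x‖^2) + 1)/((‖x‖^2)^2 * (Real.log (‖x‖^2))^2))) * ‖x‖^2 := by
      rw [← hsum]; ring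
    rw [hcollect, hlogsq]
    field_simp
    ring


/-- For `a > 0`, the function `u(x) = (2/a)(log‖x‖ + log log‖x‖)` is positive and smooth on
the planar exterior domain `{‖x‖ > 3}` and satisfies `-Δu = (2/a) e^{-au}` there. -/
theorem log_loglog_solution (a : ℝ) (ha : 0 < a)
    (u : EuclideanSpace ℝ (Fin 2) → ℝ)
    (hu : ∀ x : EuclideanSpace ℝ (Fin 2),
      u x = (2 / a) * (Real.log ‖x‖ + Real.log (Real.log ‖x‖))) :
    (∀ x : EuclideanSpace ℝ (Fin 2), 3 < ‖x‖ → 0 < u x) ∧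
    ContDiffOn ℝ (⊤ : ℕ∞) u {x : EuclideanSpace ℝ (Fin 2) | 3 < ‖x‖} ∧
    (∀ x : EuclideanSpace ℝ (Fin 2), 3 < ‖x‖ →
      -laplacian 2 u x = (2 / a) * Real.exp (-a * u x)) := by
  obtain ⟨h1, h2, h3⟩ := log_loglog_solution' a ha u hu
  exact ⟨h1, h2, fun x hx => by rw [laplacian]; exact h3 x hx⟩
end
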